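/- arXiv:2411.13450 — 2 statements merged into one kernel-verified Lean document; each statement's English description precedes it below -/
import Mathlib

section
/- Let q ≥ 1 and Δ ≥ 0 be integers, let n ≥ 1, and let r_1,…,r_n be integers with 0 ≤ r_i ≤ 2q−2 for all i. There exist nonnegative integers u_1,…,u_n, v_1,…,v_n with u_i + v_i = r_i and 0 ≤ u_i, v_i ≤ q−1 for all i, and (u_1+⋯+u_n) − (v_1+⋯+v_n) ≥ Δ, if and only if Σ_{i=1}^n θ_q(r_i) ≥ Δ. (Equivalently: the monomial z_1^{r_1}⋯z_n^{r_n} appears in the product h^{(q)}_u · h^{(q)}_v of q-truncated complete symmetric polynomials for some u, v with u − v ≥ Δ if and only if Σθ_q(r_i) ≥ Δ.) -/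
/-- `θ_q(r) = r` for `0 ≤ r ≤ q-1` and `θ_q(r) = 2q-2-r` for `q-1 ≤ r ≤ 2q-2`. -/
def theta (q r : ℕ) : ℕ := if r ≤ q - 1 then r else 2 * q - 2 - r

/-- Corollary 8.4: given `0 ≤ r_i ≤ 2q-2`, there exist `u_i, v_i` with
`u_i + v_i = r_i`, `0 ≤ u_i, v_i ≤ q-1`, and `Σu - Σv ≥ Δ`, iff `Σ θ_q(r_i) ≥ Δ`. -/
theorem statement13 (q Δ : ℕ) (hq : 1 ≤ q) (n : ℕ) (hn : 1 ≤ n)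
    (r : Fin n → ℕ) (hr : ∀ i, r i ≤ 2 * q - 2) :
    (∃ u v : Fin n → ℕ,
        (∀ i, u i + v i = r i ∧ u i ≤ q - 1 ∧ v i ≤ q - 1) ∧
        (Δ : ℤ) ≤ (∑ i, (u i : ℤ)) - ∑ i, (v i : ℤ)) ↔
      Δ ≤ ∑ i, theta q (r i) := by
  constructor
  · rintro ⟨u, v, h, hΔ⟩
    have key : ∀ i ∈ Finset.univ, (u i : ℤ) - v i ≤ (theta q (r i) : ℤ) := by
      intro i _
      obtain ⟨h1, h2, h3⟩ := h i
      have := hr i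
      simp only [theta]
      split <;> omega
    have : (∑ i, (u i : ℤ)) - ∑ i, (v i : ℤ) ≤ ∑ i, (theta q (r i) : ℤ) := by
      rw [← Finset.sum_sub_distrib]
      exact Finset.sum_le_sum key
    have := hΔ.trans this
    rw [← Nat.cast_sum] at this
    exact_mod_cast this
  · intro hΔ
    refine ⟨fun i => min (r i) (q - 1), fun i => r i - min (r i) (q - 1), ?_, ?_⟩
    · intro i
      have := hr i
      dsimp only
      refine ⟨by omega, by omega, by omega⟩
    · have key : ∀ i, ((min (r i) (q - 1) : ℕ) : ℤ) - ((r i - min (r i) (q - 1) : ℕ) : ℤ) =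
          (theta q (r i) : ℤ) := by
        intro i
        have := hr i
        simp only [theta]
        split <;> omega
      dsimp only
      rw [← Finset.sum_sub_distrib]
      calc (Δ : ℤ) ≤ ((∑ i, theta q (r i) : ℕ) : ℤ) := by exact_mod_cast hΔ
        _ = _ := by rw [Nat.cast_sum]; exact (Finset.sum_congr rfl fun i _ => (key i).symm)
end

section
/- Let k be a field and let d ≥ r ≥ 1 be integers. Let φ : k[t]^{d+1} → k[t]^{d−r+1} be the k[t]-linear map defined on the standard basis e_0,…,e_d of the source and e'_0,…,e'_{d−r} of the target by φ(e_j) = Σ_k C(r,k)·t^{r−k}·e'_{j−k}, the sum over those integers k with 0 ≤ k ≤ r and 0 ≤ j−k ≤ d−r. Then the kernel of φ is a free k[t]-module of rank r with basis f_0,…,f_{r−1}, where f_i = Σ_{j=i}^{d} (−1)^{j−i} C(r+j−i−1, j−i) · t^{j−i} · e_j for i = 0,…,r−1. -/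
noncomputable section

/-- The matrix of the map `φ : k[t]^{d+1} → k[t]^{d-r+1}`,
`φ(e_j) = Σ_m C(r,m)·t^{r-m}·e'_{j-m}` (sum over `0 ≤ m ≤ r`, `0 ≤ j-m ≤ d-r`);
its `(i',j)` entry is `C(r, j-i')·t^{r-(j-i')}` if `i' ≤ j ≤ i'+r` and `0` otherwise. -/
def phiMat (k : Type) [Field k] (d r : ℕ) :
    Matrix (Fin (d - r + 1)) (Fin (d + 1)) (Polynomial k) :=
  fun i' j =>
    if (i' : ℕ) ≤ (j : ℕ) ∧ (j : ℕ) ≤ (i' : ℕ) + r then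
      Polynomial.C ((Nat.choose r ((j : ℕ) - (i' : ℕ)) : k)) *
        Polynomial.X ^ (r - ((j : ℕ) - (i' : ℕ)))
    else 0

/-- The `k[t]`-linear map `φ : k[t]^{d+1} → k[t]^{d-r+1}`. -/
def phiMap (k : Type) [Field k] (d r : ℕ) :
    (Fin (d + 1) → Polynomial k) →ₗ[Polynomial k] (Fin (d - r + 1) → Polynomial k) :=
  (phiMat k d r).mulVecLin

/-- The claimed basis of the kernel:
`f_i = Σ_{j=i}^d (-1)^{j-i} C(r+j-i-1, j-i) · t^{j-i} · e_j`. -/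
def fKer (k : Type) [Field k] (d r : ℕ) : Fin r → (Fin (d + 1) → Polynomial k) :=
  fun i j =>
    if (i : ℕ) ≤ (j : ℕ) then
      Polynomial.C ((-1 : k) ^ ((j : ℕ) - (i : ℕ)) *
          (Nat.choose (r + ((j : ℕ) - (i : ℕ)) - 1) ((j : ℕ) - (i : ℕ)) : k)) *
        Polynomial.X ^ ((j : ℕ) - (i : ℕ))
    else 0

end

/-! Identify `k[t]^{d+1}` with polynomials `v(s)` of degree `≤ d`. Then `(φ v)_{i'}` is the
coefficient of `s^{i'+r}` in `(1 + t s)^r v(s)`, and `f_i` is `s^i (1 + t s)^{-r}` truncated above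
degree `d`; since `i'+r ≤ d`, the truncation is invisible and `φ(f_i)` is the coefficient of
`s^{i'+r}` in `s^i`, which vanishes because `i < r` (Vandermonde's identity for `C(-r + r, N)`).
Conversely, row `n - r` of `φ` has entry `1` in column `n` and zeros beyond it, so a kernel vector
is determined by its first `r` coordinates; on those the `f_i` form a unitriangular matrix. -/

open Finset Polynomial

theorem Ring.choose_neg_natCast (r n : ℕ) :
    Ring.choose (-(r : ℤ)) n = (-1) ^ n * ((r + n - 1).choose n : ℤ) := by
  rw [Ring.choose_neg', Units.smul_def, Int.coe_negOnePow_natCast, smul_eq_mul]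
  rfl

theorem sum_range_neg_one_pow_mul_choose_mul_choose_eq_zero (r : ℕ) {N : ℕ} (hN : 0 < N) :
    ∑ n ∈ range (N + 1), (-1 : ℤ) ^ n * (r + n - 1).choose n * r.choose (N - n) = 0 := by
  have h := Ring.add_choose_eq N (Commute.all (-(r : ℤ)) r)
  rw [neg_add_cancel, Ring.choose_zero_pos ℤ hN, Nat.sum_antidiagonal_eq_sum_range_succ_mk] at h
  simp only [Ring.choose_neg_natCast, Ring.choose_natCast] at h
  exact h.symm

theorem LinearMap.ker_eq_span_and_linearIndependent_of_bijective {R M N P ι : Type*} [Ring R]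
    [AddCommGroup M] [Module R M] [AddCommGroup N] [Module R N] [AddCommGroup P] [Module R P]
    [Fintype ι] {φ : M →ₗ[R] N} {π : M →ₗ[R] P} {f : ι → M} (hf : ∀ i, φ (f i) = 0)
    (hπ : ∀ v, φ v = 0 → π v = 0 → v = 0)
    (hbij : Function.Bijective (π ∘ₗ Fintype.linearCombination R f)) :
    ker φ = Submodule.span R (Set.range f) ∧ LinearIndependent R f := by
  have hspan : Submodule.span R (Set.range f) ≤ ker φ :=
    Submodule.span_le.2 (Set.range_subset_iff.2 hf)
  rw [coe_comp] at hbij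
  refine ⟨le_antisymm (fun v hv => ?_) hspan,
    linearIndependent_iff_injective_fintypeLinearCombination.2 hbij.1.of_comp⟩
  obtain ⟨g, hg⟩ := hbij.2 (π v)
  have hu : Fintype.linearCombination R f g ∈ Submodule.span R (Set.range f) := by
    rw [← Fintype.range_linearCombination]
    exact mem_range_self _ g
  have hvu := hπ (v - Fintype.linearCombination R f g)
    (by rw [map_sub, mem_ker.1 hv, mem_ker.1 (hspan hu), sub_zero])
    (by rw [map_sub, ← hg, Function.comp_apply, sub_self])
  rwa [sub_eq_zero.1 hvu]

section

variable {k : Type} [Field k] {d r : ℕ}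

theorem phiMat_mul_fKer (i' : Fin (d - r + 1)) (i : Fin r) (j : Fin (d + 1)) :
    phiMat k d r i' j * fKer k d r i j =
      if (j : ℕ) ∈ Ico (i : ℕ) (i' + r + 1) then
        C (((-1 : ℤ) ^ (j - i : ℕ) * (r + (j - i : ℕ) - 1).choose (j - i) *
          r.choose (i' + r - j) : ℤ) : k) * X ^ (i' + r - i : ℕ)
      else 0 := by
  unfold phiMat fKer
  by_cases hij : (i : ℕ) ≤ j
  · by_cases hi'j : (i' : ℕ) ≤ j
    · by_cases hjr : (j : ℕ) ≤ i' + r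
      · rw [if_pos ⟨hi'j, hjr⟩, if_pos hij, if_pos (mem_Ico.2 ⟨hij, by omega⟩),
          Nat.choose_symm_of_eq_add (show r = (j - i' : ℕ) + (i' + r - j) by omega),
          mul_mul_mul_comm, ← C_mul, ← pow_add,
          show r - (j - i' : ℕ) + (j - i : ℕ) = i' + r - i by omega]
        push_cast
        rw [mul_comm (r.choose _ : k)]
      · rw [if_neg (by omega), zero_mul, if_neg (by simp; omega)]
    · rw [if_neg (by omega), zero_mul, if_pos (mem_Ico.2 ⟨hij, by omega⟩),
        Nat.choose_eq_zero_of_lt (show r < i' + r - j by omega)]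
      simp
  · rw [if_neg hij, mul_zero, if_neg (by simp; omega)]

theorem phiMap_fKer (hd : r ≤ d) (i : Fin r) : phiMap k d r (fKer k d r i) = 0 := by
  ext1 i'
  have hN : 0 < (i' : ℕ) + r - i := by omega
  have hsub : Ico (i : ℕ) (i' + r + 1) ⊆ range (d + 1) := fun j hj => by
    simp only [mem_Ico, mem_range] at hj ⊢
    omega
  simp only [phiMap, Matrix.mulVecLin_apply, Matrix.mulVec, dotProduct, Pi.zero_apply,
    phiMat_mul_fKer]
  rw [Fin.sum_univ_eq_sum_range (fun j => if j ∈ Ico (i : ℕ) (i' + r + 1) then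
      C (((-1 : ℤ) ^ (j - i) * (r + (j - i) - 1).choose (j - i) *
        r.choose (i' + r - j) : ℤ) : k) * X ^ (i' + r - i) else 0),
    sum_ite_mem, inter_eq_right.2 hsub, sum_Ico_eq_sum_range, ← sum_mul, ← map_sum,
    ← Int.cast_sum, show (i' : ℕ) + r + 1 - i = (i' + r - i) + 1 by omega]
  simp only [Nat.add_sub_cancel_left,
    show ∀ n, (i' : ℕ) + r - (i + n) = i' + r - i - n by omega,
    sum_range_neg_one_pow_mul_choose_mul_choose_eq_zero r hN, Int.cast_zero, map_zero, zero_mul]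

theorem phiMat_eq_zero_of_lt {i' : Fin (d - r + 1)} {j : Fin (d + 1)} (h : (i' : ℕ) + r < j) :
    phiMat k d r i' j = 0 :=
  if_neg (by omega)

theorem phiMat_eq_one_of_eq {i' : Fin (d - r + 1)} {j : Fin (d + 1)} (h : (j : ℕ) = i' + r) :
    phiMat k d r i' j = 1 := by
  rw [phiMat, if_pos (by omega), show (j - i' : ℕ) = r by omega]
  simp

theorem eq_zero_of_phiMap_eq_zero {v : Fin (d + 1) → k[X]} (hv : phiMap k d r v = 0)
    (hlow : ∀ j : Fin (d + 1), (j : ℕ) < r → v j = 0) : v = 0 := by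
  suffices ∀ n (hn : n < d + 1), v ⟨n, hn⟩ = 0 from funext fun j => this j j.2
  intro n
  induction n using Nat.strong_induction_on with | _ n ih =>
  intro hn
  rcases lt_or_ge n r with hnr | hnr
  · exact hlow _ hnr
  have hrow := congrFun hv ⟨n - r, by omega⟩
  rw [phiMap, Matrix.mulVecLin_apply, Matrix.mulVec, dotProduct, Pi.zero_apply,
    sum_eq_single ⟨n, hn⟩ (fun j _ hj => ?_) (by simp),
    phiMat_eq_one_of_eq (by simp; omega), one_mul] at hrow
  · exact hrow
  rcases lt_or_gt_of_ne (Fin.val_ne_of_ne hj) with hjn | hjn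
  · rw [ih j hjn j.2, mul_zero]
  · rw [phiMat_eq_zero_of_lt (by simp only at hjn ⊢; omega), zero_mul]

theorem det_fKer_castLE (h : r ≤ d + 1) :
    (Matrix.of fun j i => fKer k d r i (Fin.castLE h j)).det = 1 := by
  have hlower : (Matrix.of fun j i => fKer k d r i (Fin.castLE h j)).IsLowerTriangular :=
    fun j i (hij : j < i) => if_neg (by simpa using hij)
  rw [Matrix.det_of_isLowerTriangular _ hlower]
  exact prod_eq_one fun i _ => by simp [fKer]

theorem bijective_funLeft_castLE_comp_linearCombination_fKer (h : r ≤ d + 1) :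
    Function.Bijective (LinearMap.funLeft k[X] k[X] (Fin.castLE h) ∘ₗ
      Fintype.linearCombination k[X] (fKer k d r)) := by
  set T : Matrix (Fin r) (Fin r) k[X] := Matrix.of fun j i => fKer k d r i (Fin.castLE h j)
  have hT : IsUnit T := by
    rw [Matrix.isUnit_iff_isUnit_det, det_fKer_castLE]
    exact isUnit_one
  have hmulVec : ⇑(LinearMap.funLeft k[X] k[X] (Fin.castLE h) ∘ₗ
      Fintype.linearCombination k[X] (fKer k d r)) = T.mulVec := by
    ext g j
    simp [T, Fintype.linearCombination_apply, Matrix.mulVec, dotProduct, mul_comm]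
  rw [hmulVec]
  exact ⟨Matrix.mulVec_injective_of_isUnit hT, Matrix.mulVec_surjective_iff_isUnit.2 hT⟩

end

theorem statement15_general (k : Type) [Field k] (d r : ℕ) (hd : r ≤ d) :
    LinearMap.ker (phiMap k d r) =
        Submodule.span (Polynomial k) (Set.range (fKer k d r)) ∧
      LinearIndependent (Polynomial k) (fKer k d r) :=
  LinearMap.ker_eq_span_and_linearIndependent_of_bijective (phiMap_fKer hd)
    (fun _ hv htrunc => eq_zero_of_phiMap_eq_zero hv fun j hj => congrFun htrunc ⟨j, hj⟩)
    (bijective_funLeft_castLE_comp_linearCombination_fKer (by omega))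

/-- Lemma 3.3: for `d ≥ r ≥ 1`, the kernel of `φ` is the free `k[t]`-module of
rank `r` with basis `f_0, …, f_{r-1}`. -/
theorem statement15 (k : Type) [Field k] (d r : ℕ) (hr : 1 ≤ r) (hd : r ≤ d) :
    LinearMap.ker (phiMap k d r) =
        Submodule.span (Polynomial k) (Set.range (fKer k d r)) ∧
      LinearIndependent (Polynomial k) (fKer k d r) :=
  statement15_general k d r hd
end
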